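/- arXiv:2006.11800 — 7 statements merged into one kernel-verified Lean document; each statement's English description precedes it below -/
import Mathlib

section
/- If x is an irreducible point of a poset P (i.e., the set of elements strictly below x has a maximum, or the set of elements strictly above x has a minimum), then P has the fixed point property if and only if P \ {x} has the fixed point property. -/
/-!
If `m` is the top of the elements below `x`, sending `x` to `m` is a monotone retraction of `P`
onto `P \ {x}`, and retracts inherit the fixed point property. Conversely, for monotone `f` on `P`,
the retraction after `f` has a fixed point `z ≠ x`: either `f z = z`, or `f z = x` and `z = m`, so
`x ≤ f x`. Then either `x` is fixed, or `f` maps the up-set of `f x > x` into itself; this up-set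
misses `x` and is a retract of `P \ {x}`, so `f` has a fixed point there. The other kind of
irreducible point is the order dual.
-/

variable {α : Type*}

def belowSet [PartialOrder α] (A : Set α) : Set α := {p | ∃ a ∈ A, p ≤ a}

def aboveSet [PartialOrder α] (A : Set α) : Set α := {p | ∃ a ∈ A, a ≤ p}

def connRel [PartialOrder α] (S : Set α) (x y : α) : Prop :=
  Relation.ReflTransGen (fun a b => a ∈ S ∧ b ∈ S ∧ (a ≤ b ∨ b ≤ a)) x y

def connComp [PartialOrder α] (S : Set α) (x : α) : Set α := {y | connRel S x y}

def IsConnSub [PartialOrder α] (S : Set α) : Prop :=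
  S.Nonempty ∧ ∀ x ∈ S, ∀ y ∈ S, connRel S x y

def IsConnCompOf [PartialOrder α] (S C : Set α) : Prop := ∃ x ∈ S, C = connComp S x

def crosscut [PartialOrder α] (X : Set α) : Set (Set α) :=
  {C | ∃ A : Set α, A ⊆ X ∧ A.Nonempty ∧ IsConnCompOf (belowSet A) C}

def crosscutU [PartialOrder α] (X : Set α) : Set (Set α) :=
  {C | ∃ A : Set α, A ⊆ X ∧ A.Nonempty ∧ IsConnCompOf (aboveSet A) C}

def mxl (α : Type*) [PartialOrder α] : Set α := {a | IsMax a}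
def mnl (α : Type*) [PartialOrder α] : Set α := {a | IsMin a}

def DSet (α : Type*) [PartialOrder α] : Set (Set α) := crosscut (mxl α)
def USet (α : Type*) [PartialOrder α] : Set (Set α) := crosscutU (mnl α)

def FPP (β : Type*) [Preorder β] : Prop := ∀ f : β → β, Monotone f → ∃ x, f x = x

theorem FPP.of_leftInverse [Preorder α] {β : Type*} [Preorder β] {r : α → β} {s : β → α}
    (hr : Monotone r) (hs : Monotone s) (hrs : Function.LeftInverse r s) (h : FPP α) :
    FPP β := by
  intro g hg
  obtain ⟨p, hp⟩ := h (s ∘ g ∘ r) (hs.comp (hg.comp hr))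
  refine ⟨r p, ?_⟩
  calc g (r p) = r (s (g (r p))) := (hrs _).symm
    _ = r p := congrArg r hp

theorem fpp_orderDual_iff [Preorder α] : FPP αᵒᵈ ↔ FPP α :=
  ⟨fun h f hf => h (OrderDual.toDual ∘ f ∘ OrderDual.ofDual) hf.dual,
    fun h f hf => h (OrderDual.ofDual ∘ f ∘ OrderDual.toDual) hf.dual⟩

open Classical in
noncomputable def iciRetraction [Preorder α] (a : α) (p : α) : Set.Ici a :=
  if h : a ≤ p then ⟨p, h⟩ else ⟨a, le_rfl⟩

theorem iciRetraction_of_le [Preorder α] {a p : α} (h : a ≤ p) :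
    iciRetraction a p = ⟨p, h⟩ :=
  dif_pos h

theorem monotone_iciRetraction [Preorder α] (a : α) : Monotone (iciRetraction a) := by
  intro p q hpq
  by_cases hp : a ≤ p
  · rw [iciRetraction_of_le hp, iciRetraction_of_le (hp.trans hpq)]
    exact hpq
  · exact (dif_neg hp).trans_le (iciRetraction a q).2

theorem FPP.Ici_of_forall_le [Preorder α] {P : α → Prop} (h : FPP {y // P y}) {a : α}
    (hP : ∀ y, a ≤ y → P y) : FPP (Set.Ici a) :=
  h.of_leftInverse (r := iciRetraction a ∘ Subtype.val) (s := fun b => ⟨b, hP b b.2⟩)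
    ((monotone_iciRetraction a).comp fun _ _ => id) (fun _ _ => id)
    fun b => iciRetraction_of_le b.2

theorem FPP.exists_fixedPoint_of_le_apply [Preorder α] {a : α} (h : FPP (Set.Ici a))
    {f : α → α} (hf : Monotone f) (ha : a ≤ f a) : ∃ p, f p = p := by
  obtain ⟨p, hp⟩ := h (fun p => ⟨f p, ha.trans (hf p.2)⟩) fun _ _ hpq => hf hpq
  exact ⟨p, congrArg Subtype.val hp⟩

open Classical in
noncomputable def collapseTo (x m : α) (hm : m ≠ x) (p : α) : {y // y ≠ x} :=
  if h : p = x then ⟨m, hm⟩ else ⟨p, h⟩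

theorem collapseTo_self {x m : α} (hm : m ≠ x) : collapseTo x m hm x = ⟨m, hm⟩ :=
  dif_pos rfl

theorem collapseTo_of_ne {x m : α} (hm : m ≠ x) {p : α} (hp : p ≠ x) :
    collapseTo x m hm p = ⟨p, hp⟩ :=
  dif_neg hp

section LowerCover

variable [PartialOrder α] {x m : α}

theorem monotone_collapseTo (h : IsGreatest (Set.Iio x) m) : Monotone (collapseTo x m h.1.ne) := by
  intro p q hpq
  by_cases hp : p = x <;> by_cases hq : q = x
  · simp only [hp, hq, le_refl]
  · rw [hp, collapseTo_self, collapseTo_of_ne _ hq]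
    exact h.1.le.trans (hp ▸ hpq)
  · rw [hq, collapseTo_self, collapseTo_of_ne _ hp]
    exact h.2 (lt_of_le_of_ne (hq ▸ hpq) hp)
  · rw [collapseTo_of_ne _ hp, collapseTo_of_ne _ hq]
    exact hpq

theorem FPP.ne_of_isGreatest_Iio (h : IsGreatest (Set.Iio x) m) (hP : FPP α) :
    FPP {y // y ≠ x} :=
  hP.of_leftInverse (monotone_collapseTo h) (fun _ _ => id) fun p => collapseTo_of_ne _ p.2

theorem FPP.of_ne_of_isGreatest_Iio (h : IsGreatest (Set.Iio x) m) (hQ : FPP {y // y ≠ x}) :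
    FPP α := by
  intro f hf
  obtain ⟨z, hz⟩ := hQ (collapseTo x m h.1.ne ∘ f ∘ Subtype.val)
    ((monotone_collapseTo h).comp (hf.comp fun _ _ => id))
  by_cases hfz : f z = x
  · have hzm : (z : α) = m := by
      rw [← hz, Function.comp_apply, Function.comp_apply, hfz, collapseTo_self]
    have hzx : (z : α) ≤ x := hzm ▸ h.1.le
    have hx : x ≤ f x := hfz.symm.trans_le (hf hzx)
    rcases hx.eq_or_lt with hfx | hfx
    · exact ⟨x, hfx.symm⟩
    · exact (hQ.Ici_of_forall_le fun y hy => (hfx.trans_le hy).ne').exists_fixedPoint_of_le_apply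
        hf (hf hfx.le)
  · refine ⟨z, ?_⟩
    simpa only [Function.comp_apply, collapseTo_of_ne _ hfz] using congrArg Subtype.val hz

theorem fpp_iff_fpp_ne_of_isGreatest_Iio (h : IsGreatest (Set.Iio x) m) :
    FPP α ↔ FPP {y // y ≠ x} :=
  ⟨FPP.ne_of_isGreatest_Iio h, FPP.of_ne_of_isGreatest_Iio h⟩

theorem fpp_iff_fpp_ne_of_isLeast_Ioi (h : IsLeast (Set.Ioi x) m) :
    FPP α ↔ FPP {y // y ≠ x} :=
  fpp_orderDual_iff.symm.trans <|
    (fpp_iff_fpp_ne_of_isGreatest_Iio (α := αᵒᵈ) (x := OrderDual.toDual x) h.dual).trans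
      (fpp_orderDual_iff (α := {y // y ≠ x}))

end LowerCover

theorem stmt0 [PartialOrder α] (x : α)
    (hirr : (∃ m, m < x ∧ ∀ y, y < x → y ≤ m) ∨ (∃ m, x < m ∧ ∀ y, x < y → m ≤ y)) :
    FPP α ↔ FPP {y : α // y ≠ x} := by
  rcases hirr with ⟨m, hm, hmax⟩ | ⟨m, hm, hmin⟩
  · exact fpp_iff_fpp_ne_of_isGreatest_Iio ⟨hm, fun y hy => hmax y hy⟩
  · exact fpp_iff_fpp_ne_of_isLeast_Ioi ⟨hm, fun y hy => hmin y hy⟩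
end

section
/- Every finite poset that is dismantlable by irreducibles has the fixed point property. -/
/-!
If `x` is irreducible with, say, a greatest element `m` strictly below it, then sending `x` to `m`
is a monotone retraction `r` of `P` onto `P \ {x}`. Given a monotone `f` on `P`, a fixed point `p`
of `r ∘ f` on `P \ {x}` is fixed by `f` unless `f p = x`; in that case `p = m < x`, so
`x = f p ≤ f x`, and in a finite poset a point moved upwards forces a fixed point. The other kind of
irreducible is handled by order duality, and the theorem follows by induction along the
dismantling sequence.
-/

variable {α : Type*}

def IrredIn [PartialOrder α] (S : Set α) (x : α) : Prop :=
  x ∈ S ∧ ((∃ m ∈ S, m < x ∧ ∀ y ∈ S, y < x → y ≤ m) ∨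
           (∃ m ∈ S, x < m ∧ ∀ y ∈ S, x < y → m ≤ y))

def DismantlableByIrreducibles [PartialOrder α] (S : Set α) : Prop :=
  ∃ (n : ℕ) (Ps : ℕ → Set α), Ps 0 = S ∧ (∃ z, Ps n = {z}) ∧
    ∀ j < n, ∃ x, IrredIn (Ps j) x ∧ Ps (j + 1) = Ps j \ {x}

section FixedPoints

variable {β γ : Type*} [PartialOrder β] [PartialOrder γ]

theorem fpp_of_unique [Unique β] : FPP β :=
  fun _ _ => ⟨default, Subsingleton.elim _ _⟩

theorem FPP.of_orderIso (e : β ≃o γ) (h : FPP β) : FPP γ := by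
  intro f hf
  obtain ⟨p, hp⟩ := h (e.symm ∘ f ∘ e) (e.symm.monotone.comp (hf.comp e.monotone))
  exact ⟨e p, by simpa using congrArg e hp⟩

theorem FPP.ofDual (h : FPP βᵒᵈ) : FPP β :=
  fun f hf => h f hf.dual

theorem FPP.subtype_ne_toDual {x : β} (h : FPP {y // y ≠ x}) :
    FPP {y : βᵒᵈ // y ≠ OrderDual.toDual x} :=
  fun f hf => h f fun _ _ hab => hf hab

-- A maximal element of `{y | y ≤ f y}` is a fixed point.
theorem Monotone.exists_fixedPt_of_le_apply [Finite β] {f : β → β} (hf : Monotone f) {x : β}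
    (hx : x ≤ f x) : ∃ p, f p = p := by
  obtain ⟨p, hp, hmax⟩ := (Set.toFinite {y | y ≤ f y}).exists_maximal ⟨x, hx⟩
  exact ⟨p, le_antisymm (hmax (hf hp) hp) hp⟩

theorem FPP.of_isGreatest_Iio [Finite β] {x m : β} (hm : IsGreatest (Set.Iio x) m)
    (h : FPP {y // y ≠ x}) : FPP β := by
  classical
  intro f hf
  let r : β → {y // y ≠ x} := fun y => if hy : y = x then ⟨m, hm.1.ne⟩ else ⟨y, hy⟩
  have hr : Monotone r := by
    intro a b hab
    by_cases ha : a = x <;> by_cases hb : b = x <;> simp only [r, ha, hb, dite_true, dite_false]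
    · exact le_rfl
    · exact hm.1.le.trans (ha ▸ hab)
    · exact hm.2 (lt_of_le_of_ne (hb ▸ hab) ha)
    · exact hab
  obtain ⟨p, hp⟩ := h (r ∘ f ∘ Subtype.val) (hr.comp (hf.comp fun _ _ => id))
  by_cases hpx : f p = x
  · have hpm : (p : β) = m := by simpa [r, hpx] using (congrArg Subtype.val hp).symm
    have hp_le : (p : β) ≤ x := hpm ▸ hm.1.le
    exact hf.exists_fixedPt_of_le_apply (hpx ▸ hf hp_le)
  · exact ⟨p, by simpa [r, hpx] using congrArg Subtype.val hp⟩

theorem FPP.of_isLeast_Ioi [Finite β] {x m : β} (hm : IsLeast (Set.Ioi x) m)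
    (h : FPP {y // y ≠ x}) : FPP β :=
  FPP.ofDual <| FPP.of_isGreatest_Iio (x := OrderDual.toDual x) (by simpa using hm.dual)
    h.subtype_ne_toDual

end FixedPoints

section Dismantling

variable [PartialOrder α]

def diffSingletonOrderIso (S : Set α) {x : α} (hx : x ∈ S) :
    ↥(S \ {x}) ≃o {y : ↥S // y ≠ ⟨x, hx⟩} where
  toFun y := ⟨⟨y, y.2.1⟩, fun h => y.2.2 (congrArg Subtype.val h)⟩
  invFun y := ⟨y.1, y.1.2, fun h => y.2 (Subtype.ext h)⟩
  left_inv _ := rfl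
  right_inv _ := rfl
  map_rel_iff' := Iff.rfl

theorem FPP.of_irredIn [Finite α] {S : Set α} {x : α} (hx : IrredIn S x)
    (h : FPP ↥(S \ {x})) : FPP ↥S := by
  obtain ⟨hxS, ⟨m, hmS, hmx, hmax⟩ | ⟨m, hmS, hxm, hmin⟩⟩ := hx
  · exact FPP.of_isGreatest_Iio (x := ⟨x, hxS⟩) (m := ⟨m, hmS⟩) ⟨hmx, fun y hy => hmax y y.2 hy⟩
      (h.of_orderIso (diffSingletonOrderIso S hxS))
  · exact FPP.of_isLeast_Ioi (x := ⟨x, hxS⟩) (m := ⟨m, hmS⟩) ⟨hxm, fun y hy => hmin y y.2 hy⟩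
      (h.of_orderIso (diffSingletonOrderIso S hxS))

theorem DismantlableByIrreducibles.fpp [Finite α] {S : Set α}
    (h : DismantlableByIrreducibles S) : FPP ↥S := by
  obtain ⟨n, Ps, rfl, ⟨z, hz⟩, hstep⟩ := h
  refine Nat.decreasingInduction (motive := fun j _ => FPP ↥(Ps j)) (fun j hj ih => ?_) ?_
    (Nat.zero_le n)
  · obtain ⟨x, hx, hPs⟩ := hstep j hj
    exact FPP.of_irredIn hx (hPs ▸ ih)
  · rw [hz]
    exact fpp_of_unique

end Dismantling

theorem stmt1 [PartialOrder α] [Finite α]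
    (h : DismantlableByIrreducibles (Set.univ : Set α)) : FPP α :=
  h.fpp.of_orderIso OrderIso.Set.univ
end

section
/- Let n ≥ 2 and let P be the 2n-crown: the poset on elements {1,…,n} ∪ {n+1,…,2n} where the only strict relations are i < n+i for 1 ≤ i ≤ n, i < n+i+1 for 1 ≤ i ≤ n−1, and n < n+1. Then every order-preserving map f : P → P that is not bijective has a fixed point. -/
/-!
Listing the crown along its comparability cycle (`Crown.index`: maximal 0, minimal 0, maximal 1,
minimal 1, …) identifies it with `ZMod (2 * n)`, the comparable pairs being exactly the cyclically
adjacent positions, so a monotone `f` sends adjacent positions to equal or adjacent ones. If `f`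
has no fixed point, its displacement `x - f x` is never `0` and changes by `0`, `1` or `2` from
one position to the next; a jump by `2` across `0` would make `f` swap two comparable elements,
which monotonicity forbids. Read in `{1, …, 2n - 1}`, the displacement therefore never decreases
around the cycle, so it is constant: `f` is a rotation, hence bijective.
-/

/-- The `2n`-crown: `.inl i` are the minimal elements (corresponding to `1,…,n`)
and `.inr j` the maximal elements (corresponding to `n+1,…,2n`), with
`.inl i` below exactly `.inr i` and `.inr (i+1 mod n)` (cyclically): this encodes
the relations `i < n+i`, `i < n+i+1` and `n < n+1`. -/
def Crown (n : ℕ) : Type := Fin n ⊕ Fin n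

def crownLE {n : ℕ} : Fin n ⊕ Fin n → Fin n ⊕ Fin n → Prop
  | .inl i, .inl j => i = j
  | .inl i, .inr j => j = i ∨ (j : ℕ) = ((i : ℕ) + 1) % n
  | .inr i, .inr j => i = j
  | .inr _, .inl _ => False

instance (n : ℕ) : PartialOrder (Crown n) where
  le := crownLE
  le_refl x := by cases x <;> simp [crownLE]
  le_trans a b c hab hbc := by
    cases a <;> cases b <;> cases c <;> simp_all [crownLE]
  le_antisymm a b hab hba := by
    cases a <;> cases b <;> simp_all [crownLE] <;> rfl

theorem Monotone.eq_of_map_eq_of_map_eq {α : Type*} [PartialOrder α] {f : α → α}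
    (hf : Monotone f) {u v : α} (huv : u ≤ v ∨ v ≤ u) (hu : f u = v) (hv : f v = u) : u = v := by
  rcases huv with h | h
  · exact h.antisymm ((hu.symm.trans_le (hf h)).trans_eq hv)
  · exact ((hv.symm.trans_le (hf h)).trans_eq hu).antisymm h

lemma Nat.eq_add_one_mod_iff {a b N : ℕ} (ha : a < N) (hb : b < N) :
    b = (a + 1) % N ↔ b = a + 1 ∨ (b = 0 ∧ a + 1 = N) := by
  rcases (Nat.succ_le_of_lt ha).lt_or_eq with h | h
  · rw [Nat.mod_eq_of_lt h]; omega
  · rw [← h, Nat.mod_self]; omega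

namespace ZMod

lemma natCast_eq_natCast_add_one_iff {a b N : ℕ} (ha : a < N) (hb : b < N) :
    (b : ZMod N) = a + 1 ↔ b = a + 1 ∨ (b = 0 ∧ a + 1 = N) := by
  rw [← Nat.cast_succ, natCast_eq_natCast_iff', Nat.mod_eq_of_lt hb, Nat.eq_add_one_mod_iff ha hb]

variable {N : ℕ} [NeZero N]

lemma val_add_one_of_ne_zero {a : ZMod N} (h : a + 1 ≠ 0) : (a + 1).val = a.val + 1 := by
  have hcast : ((a.val + 1 : ℕ) : ZMod N) = a + 1 := by push_cast [natCast_zmod_val]; rfl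
  have hlt : a.val + 1 < N := by
    refine lt_of_le_of_ne a.val_lt fun heq => h ?_
    rw [← hcast, heq, natCast_self]
  rw [← hcast, val_cast_of_lt hlt]

lemma val_le_val_of_step {a b : ZMod N} (hb : b ≠ 0)
    (h : b = a ∨ b = a + 1 ∨ (b = a + 1 + 1 ∧ a + 1 ≠ 0)) : a.val ≤ b.val := by
  rcases h with rfl | rfl | ⟨rfl, ha⟩
  · rfl
  · rw [val_add_one_of_ne_zero hb]; omega
  · rw [val_add_one_of_ne_zero hb, val_add_one_of_ne_zero ha]; omega

theorem exists_eq_add_of_step_of_ne_self (p : ZMod N → ZMod N)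
    (hstep : ∀ x, p x = p (x + 1) ∨ p (x + 1) = p x + 1 ∨ p x = p (x + 1) + 1)
    (hfix : ∀ x, p x ≠ x) (hswap : ∀ x, p x = x + 1 → p (x + 1) ≠ x) :
    ∃ c, ∀ x, p x = x + c := by
  set d : ZMod N → ZMod N := fun x => x - p x with hd
  have hd0 (x : ZMod N) : d x ≠ 0 := fun h => hfix x (sub_eq_zero.mp h).symm
  have hdstep (x : ZMod N) :
      d (x + 1) = d x ∨ d (x + 1) = d x + 1 ∨ (d (x + 1) = d x + 1 + 1 ∧ d x + 1 ≠ 0) := by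
    simp only [hd]
    rcases hstep x with h | h | h
    · exact Or.inr (Or.inl (by rw [h]; ring))
    · exact Or.inl (by rw [h]; ring)
    · exact Or.inr (Or.inr ⟨by rw [h]; ring, fun h0 =>
        hswap x (by linear_combination -h0) (by linear_combination -h - h0)⟩)
  have hmono : Monotone fun k : ℕ => (d k).val :=
    monotone_nat_of_le_succ fun k => val_le_val_of_step (hd0 _) (by push_cast; exact hdstep k)
  have hconst (x : ZMod N) : d x = d 0 := by
    have hper : (d (N : ℕ)).val = (d (0 : ℕ)).val := by simp
    have h := le_antisymm ((hmono x.val_lt.le).trans_eq hper) (hmono (Nat.zero_le x.val))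
    simpa using val_injective N h
  exact ⟨-d 0, fun x => by linear_combination -hconst x⟩

end ZMod

namespace Crown

variable {n : ℕ}

lemma le_def {u v : Crown n} : u ≤ v ↔ crownLE u v := Iff.rfl

def index : Crown n → ℕ
  | .inl i => 2 * i + 1
  | .inr j => 2 * j

lemma index_lt (x : Crown n) : index x < 2 * n := by
  cases x <;> simp only [index] <;> omega

lemma index_injective : Function.Injective (index : Crown n → ℕ) := by
  rintro (i | i) (j | j) h <;> simp only [index] at h
  all_goals first
    | omega
    | exact congrArg Sum.inl (Fin.ext (by omega))
    | exact congrArg Sum.inr (Fin.ext (by omega))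

def toZMod (x : Crown n) : ZMod (2 * n) := index x

lemma toZMod_eq_toZMod_iff {u v : Crown n} : toZMod u = toZMod v ↔ index u = index v := by
  rw [toZMod, toZMod, ZMod.natCast_eq_natCast_iff', Nat.mod_eq_of_lt (index_lt u),
    Nat.mod_eq_of_lt (index_lt v)]

lemma toZMod_injective : Function.Injective (toZMod : Crown n → ZMod (2 * n)) :=
  fun _ _ h => index_injective (toZMod_eq_toZMod_iff.mp h)

theorem le_or_le_iff {u v : Crown n} :
    u ≤ v ∨ v ≤ u ↔
      toZMod u = toZMod v ∨ toZMod v = toZMod u + 1 ∨ toZMod u = toZMod v + 1 := by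
  rw [le_def, le_def, toZMod_eq_toZMod_iff, toZMod, toZMod,
    ZMod.natCast_eq_natCast_add_one_iff (index_lt u) (index_lt v),
    ZMod.natCast_eq_natCast_add_one_iff (index_lt v) (index_lt u)]
  rcases u with i | i <;> rcases v with j | j <;>
    simp only [crownLE, index, Fin.ext_iff, Nat.eq_add_one_mod_iff i.isLt j.isLt,
      Nat.eq_add_one_mod_iff j.isLt i.isLt] <;>
    grind

variable [NeZero n]

lemma toZMod_surjective : Function.Surjective (toZMod : Crown n → ZMod (2 * n)) := by
  intro x
  have hx := x.val_lt
  obtain ⟨k, hk | hk⟩ := Nat.even_or_odd' x.val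
  · exact ⟨.inr ⟨k, by omega⟩, by simp [toZMod, index, ← hk]⟩
  · exact ⟨.inl ⟨k, by omega⟩, by simp [toZMod, index, ← hk]⟩

lemma toZMod_bijective : Function.Bijective (toZMod : Crown n → ZMod (2 * n)) :=
  ⟨toZMod_injective, toZMod_surjective⟩

theorem exists_toZMod_map_eq_add {f : Crown n → Crown n} (hf : Monotone f)
    (hfix : ∀ x, f x ≠ x) : ∃ c, ∀ x, toZMod (f x) = toZMod x + c := by
  set e := Equiv.ofBijective _ (toZMod_bijective (n := n))
  have he (x : ZMod (2 * n)) : toZMod (e.symm x) = x := e.apply_symm_apply x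
  have he' (x : Crown n) : e.symm (toZMod x) = x := e.symm_apply_apply x
  have hadj (x : ZMod (2 * n)) : e.symm x ≤ e.symm (x + 1) ∨ e.symm (x + 1) ≤ e.symm x :=
    le_or_le_iff.mpr (Or.inr (Or.inl (by rw [he, he])))
  obtain ⟨c, hc⟩ := ZMod.exists_eq_add_of_step_of_ne_self (fun x => toZMod (f (e.symm x)))
    (fun x => le_or_le_iff.mp ((hadj x).imp (@hf _ _) (@hf _ _)))
    (fun x h => hfix (e.symm x) (toZMod_injective (by rw [h, he])))
    (fun x h1 h2 => by
      have hu : f (e.symm x) = e.symm (x + 1) := toZMod_injective (by rw [h1, he])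
      have hv : f (e.symm (x + 1)) = e.symm x := toZMod_injective (by rw [h2, he])
      exact hfix _ (hf.eq_of_map_eq_of_map_eq (hadj x) hu hv ▸ hu))
  exact ⟨c, fun x => by simpa only [he'] using hc (toZMod x)⟩

end Crown

theorem stmt2_general (n : ℕ) (f : Crown n → Crown n) (hf : Monotone f)
    (hbij : ¬ Function.Bijective f) : ∃ x, f x = x := by
  obtain rfl | hn := n.eq_zero_or_pos
  · have : IsEmpty (Crown 0) := inferInstanceAs (IsEmpty (Fin 0 ⊕ Fin 0))
    exact absurd ⟨fun a => isEmptyElim a, fun a => isEmptyElim a⟩ hbij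
  have : NeZero n := ⟨hn.ne'⟩
  by_contra! hfix
  obtain ⟨c, hc⟩ := Crown.exists_toZMod_map_eq_add hf hfix
  refine hbij ((Crown.toZMod_bijective.of_comp_iff' f).mp ?_)
  rw [show Crown.toZMod ∘ f = (· + c) ∘ Crown.toZMod from funext hc]
  exact (AddGroup.addRight_bijective c).comp Crown.toZMod_bijective

theorem stmt2 (n : ℕ) (hn : 2 ≤ n) (f : Crown n → Crown n) (hf : Monotone f)
    (hbij : ¬ Function.Bijective f) : ∃ x, f x = x :=
  stmt2_general n f hf hbij
end

section
/- Let P be a poset with mxl(P) a cutset. If the poset 𝒟(P) (ordered by inclusion) has the fixed point property, and every element C ∈ 𝒟(P), viewed as a subposet of P, has the fixed point property, then P has the fixed point property. -/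
/-!
A monotone `f : P → P` induces a monotone self-map of `𝒟(P)`: the image of a connected
element `C` of `𝒟(P)` is connected, so it lies in a single component of `⟨A⟩`, where `A` is the
set of maximal elements above `f(C)`. A fixed point `D` of that map is an element of `𝒟(P)`
with `f(D) ⊆ D`, and a fixed point of `f` restricted to `D` is a fixed point of `f`.
-/

variable {α : Type*}

section Connectivity
variable [PartialOrder α] {S T : Set α} {x y : α}

lemma connRel_of_le (hx : x ∈ S) (hy : y ∈ S) (hxy : x ≤ y) : connRel S x y :=
  .single ⟨hx, hy, .inl hxy⟩

lemma connRel_of_ge (hx : x ∈ S) (hy : y ∈ S) (hyx : y ≤ x) : connRel S x y :=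
  .single ⟨hx, hy, .inr hyx⟩

lemma connRel_symm (h : connRel S x y) : connRel S y x := by
  induction h with
  | refl => exact .refl
  | tail _ step ih => exact .head ⟨step.2.1, step.1, step.2.2.symm⟩ ih

lemma connRel_mono (hST : S ⊆ T) (h : connRel S x y) : connRel T x y :=
  Relation.ReflTransGen.mono (fun _ _ h => ⟨hST h.1, hST h.2.1, h.2.2⟩) _ _ h

lemma mem_of_connRel (h : connRel S x y) (hx : x ∈ S) : y ∈ S := by
  induction h with
  | refl => exact hx
  | tail _ step _ => exact step.2.1

lemma isConnSub_of_forall_connRel (hx : x ∈ S) (h : ∀ y ∈ S, connRel S x y) : IsConnSub S :=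
  ⟨⟨x, hx⟩, fun _ ha _ hb => (connRel_symm (h _ ha)).trans (h _ hb)⟩

lemma connComp_eq_self (hS : IsConnSub S) (hx : x ∈ S) : connComp S x = S :=
  Set.Subset.antisymm (fun _ hy => mem_of_connRel hy hx) (fun _ hy => hS.2 x hx _ hy)

lemma connRel_connComp (h : connRel S x y) : connRel (connComp S x) x y := by
  induction h with
  | refl => exact .refl
  | tail hb step ih => exact ih.tail ⟨hb, hb.tail step, step.2.2⟩

lemma isConnSub_connComp : IsConnSub (connComp S x) :=
  isConnSub_of_forall_connRel (x := x) .refl fun _ hy => connRel_connComp hy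

lemma IsConnSub.image (hS : IsConnSub S) {f : α → α} (hf : Monotone f) : IsConnSub (f '' S) := by
  refine ⟨hS.1.image f, ?_⟩
  rintro _ ⟨a, ha, rfl⟩ _ ⟨b, hb, rfl⟩
  exact Relation.ReflTransGen.lift f
    (fun u v h => ⟨⟨u, h.1, rfl⟩, ⟨v, h.2.1, rfl⟩, h.2.2.imp (@hf _ _) (@hf _ _)⟩) _ _
    (hS.2 a ha b hb)

lemma isConnSub_of_mem_DSet (hD : S ∈ DSet α) : IsConnSub S := by
  obtain ⟨A, -, -, x, -, rfl⟩ := hD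
  exact isConnSub_connComp

end Connectivity

section MaxHull
variable [PartialOrder α]

/-- For connected `S = f(C)` this is `𝒟(f)(C)`, the least element of `𝒟(P)` containing `S`. -/
def maxHull (S : Set α) : Set α := belowSet (mxl α ∩ aboveSet S)

lemma maxHull_mono : Monotone (maxHull (α := α)) := by
  rintro S T hST p ⟨m, ⟨hm, s, hs, hsm⟩, hpm⟩
  exact ⟨m, ⟨hm, s, hST hs, hsm⟩, hpm⟩

variable (hcut : ∀ x : α, ∃ m ∈ mxl α, x ≤ m)
include hcut

lemma subset_maxHull (S : Set α) : S ⊆ maxHull S := fun s hs =>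
  let ⟨m, hm, hsm⟩ := hcut s
  ⟨m, ⟨hm, s, hs, hsm⟩, hsm⟩

lemma IsConnSub.maxHull {S : Set α} (hS : IsConnSub S) : IsConnSub (maxHull S) := by
  obtain ⟨s₀, hs₀⟩ := hS.1
  have hSH := subset_maxHull hcut S
  refine isConnSub_of_forall_connRel (hSH hs₀) fun p hp => ?_
  obtain ⟨m, hmA, hpm⟩ := hp
  obtain ⟨s, hs, hsm⟩ := hmA.2
  have hmH : m ∈ _root_.maxHull S := ⟨m, hmA, le_rfl⟩
  exact ((connRel_mono hSH (hS.2 s₀ hs₀ s hs)).trans (connRel_of_le (hSH hs) hmH hsm)).trans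
    (connRel_of_ge hmH ⟨m, hmA, hpm⟩ hpm)

lemma maxHull_mem_DSet {S : Set α} (hS : IsConnSub S) : maxHull S ∈ DSet α := by
  obtain ⟨s₀, hs₀⟩ := hS.1
  obtain ⟨m₀, hm₀, hsm₀⟩ := hcut s₀
  have hm₀A : m₀ ∈ mxl α ∩ aboveSet S := ⟨hm₀, s₀, hs₀, hsm₀⟩
  have hm₀H : m₀ ∈ maxHull S := ⟨m₀, hm₀A, le_rfl⟩
  exact ⟨_, Set.inter_subset_left, ⟨m₀, hm₀A⟩, m₀, hm₀H,
    (connComp_eq_self (hS.maxHull hcut) hm₀H).symm⟩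

lemma exists_mapsTo_mem_DSet (hD : FPP (DSet α)) {f : α → α} (hf : Monotone f) :
    ∃ D ∈ DSet α, Set.MapsTo f D D := by
  let Df : DSet α → DSet α := fun C =>
    ⟨maxHull (f '' C), maxHull_mem_DSet hcut ((isConnSub_of_mem_DSet C.2).image hf)⟩
  have hDf : Monotone Df := fun C C' hCC' => maxHull_mono (Set.image_mono hCC')
  obtain ⟨⟨D, hDmem⟩, hfix⟩ := hD Df hDf
  have hfix : maxHull (f '' D) = D := congrArg Subtype.val hfix
  exact ⟨D, hDmem, fun x hx => hfix ▸ subset_maxHull hcut _ (Set.mem_image_of_mem f hx)⟩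

end MaxHull

lemma FPP.exists_fixed_of_mapsTo [PartialOrder α] {D : Set α} (hD : FPP D) {f : α → α}
    (hf : Monotone f) (hfD : Set.MapsTo f D D) : ∃ x, f x = x :=
  let ⟨x, hx⟩ := hD (hfD.restrict f D D) fun _ _ hab => hf hab
  ⟨x, congrArg Subtype.val hx⟩

theorem stmt11 [PartialOrder α]
    (hcut : ∀ x : α, ∃ m ∈ mxl α, x ≤ m)
    (hD : FPP {C : Set α // C ∈ DSet α})
    (hC : ∀ C ∈ DSet α, FPP C) :
    FPP α := by
  intro f hf
  obtain ⟨D, hDmem, hfD⟩ := exists_mapsTo_mem_DSet hcut hD hf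
  exact (hC D hDmem).exists_fixed_of_mapsTo hf hfD
end

section
/- Let P be a poset such that mxl(P) is a finite cutset of P, and let f : P → P be an order-preserving map. If f has a fixed point, then the induced map 𝒟(f) : 𝒟(P) → 𝒟(P) has a fixed point. -/
variable {α : Type*}

/-!
Every component in `𝒟(P)` is the down-set of its maximal elements, so `𝒟(P)` is finite. Starting
from the component `C₀` of a fixed point of `f`, which `f` maps into itself, we have `𝒟(f) C₀ ⊆ C₀`;
a minimal `C` with `𝒟(f) C ⊆ C` is then fixed, since `𝒟(f)` is monotone and `𝒟(f) C` is again
such a component.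
-/

theorem Set.Finite.exists_apply_eq_of_apply_le {β : Type*} [PartialOrder β] {s : Set β}
    (hs : s.Finite) {g : β → β} (hmaps : Set.MapsTo g s s) (hmono : MonotoneOn g s)
    {c₀ : β} (hc₀ : c₀ ∈ s) (hgc₀ : g c₀ ≤ c₀) : ∃ c ∈ s, g c = c := by
  obtain ⟨c, ⟨hcs, hgc⟩, hmin⟩ :=
    (hs.subset (Set.sep_subset s fun c => g c ≤ c)).exists_minimal ⟨c₀, hc₀, hgc₀⟩
  have hgg : g (g c) ≤ g c := hmono (hmaps hcs) hcs hgc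
  exact ⟨c, hcs, le_antisymm hgc (hmin ⟨hmaps hcs, hgg⟩ hgc)⟩

section Components

variable [PartialOrder α]

theorem connRel.map {S : Set α} {f : α → α} (hf : Monotone f) (hS : Set.MapsTo f S S)
    {x y : α} (h : connRel S x y) : connRel S (f x) (f y) :=
  Relation.ReflTransGen.lift f
    (fun _ _ ⟨ha, hb, hab⟩ => ⟨hS ha, hS hb, hab.imp (fun h => hf h) (fun h => hf h)⟩) x y h

theorem image_connComp_subset {S : Set α} {f : α → α} (hf : Monotone f) (hS : Set.MapsTo f S S)
    {x : α} (hx : f x = x) : f '' connComp S x ⊆ connComp S x := by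
  rintro _ ⟨y, hy, rfl⟩
  have hxy := connRel.map hf hS hy
  rwa [hx] at hxy

theorem mem_of_mem_connComp {S : Set α} {x y : α} (hx : x ∈ S) (h : y ∈ connComp S x) :
    y ∈ S := by
  rcases h.cases_tail with rfl | ⟨_, _, hc⟩
  exacts [hx, hc.2.1]

theorem eq_belowSet_inter_of_mem_crosscut {X C : Set α} (hC : C ∈ crosscut X) :
    C = belowSet (C ∩ X) := by
  obtain ⟨A, hAX, -, x, hx, rfl⟩ := hC
  apply Set.Subset.antisymm
  · intro p hp
    obtain ⟨a, ha, hpa⟩ := mem_of_mem_connComp hx hp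
    exact ⟨a, ⟨hp.tail ⟨⟨a, ha, hpa⟩, ⟨a, ha, le_rfl⟩, Or.inl hpa⟩, hAX ha⟩, hpa⟩
  · rintro p ⟨m, ⟨hm, -⟩, hpm⟩
    obtain ⟨a, ha, hma⟩ := mem_of_mem_connComp hx hm
    exact hm.tail ⟨⟨a, ha, hma⟩, ⟨a, ha, hpm.trans hma⟩, Or.inr hpm⟩

theorem crosscut_finite {X : Set α} (hX : X.Finite) : (crosscut X).Finite :=
  (hX.finite_subsets.image belowSet).subset fun C hC =>
    ⟨C ∩ X, Set.inter_subset_right, (eq_belowSet_inter_of_mem_crosscut hC).symm⟩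

theorem connComp_mem_DSet (hcut : ∀ x : α, ∃ m ∈ mxl α, x ≤ m) (x : α) :
    connComp (belowSet (mxl α)) x ∈ DSet α := by
  obtain ⟨m, hm, hxm⟩ := hcut x
  exact ⟨mxl α, subset_rfl, ⟨m, hm⟩, x, ⟨m, hm, hxm⟩, rfl⟩

end Components

theorem stmt14 [PartialOrder α]
    (hfin : (mxl α).Finite)
    (hcut : ∀ x : α, ∃ m ∈ mxl α, x ≤ m)
    (f : α → α) (hf : Monotone f)
    (Df : Set α → Set α)
    (hDf : ∀ C ∈ DSet α, Df C ∈ DSet α ∧ f '' C ⊆ Df C ∧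
      ∀ D ∈ DSet α, f '' C ⊆ D → Df C ⊆ D)
    (hfix : ∃ x, f x = x) :
    ∃ C ∈ DSet α, Df C = C := by
  obtain ⟨x, hx⟩ := hfix
  have hmono : MonotoneOn Df (DSet α) := fun C₁ h₁ C₂ h₂ hsub =>
    (hDf C₁ h₁).2.2 (Df C₂) (hDf C₂ h₂).1 ((Set.image_mono hsub).trans (hDf C₂ h₂).2.1)
  set C₀ := connComp (belowSet (mxl α)) x
  have hC₀ : C₀ ∈ DSet α := connComp_mem_DSet hcut x
  have hfC₀ : f '' C₀ ⊆ C₀ := image_connComp_subset hf (fun p _ => hcut (f p)) hx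
  exact (crosscut_finite hfin).exists_apply_eq_of_apply_le (fun C hC => (hDf C hC).1) hmono
    hC₀ ((hDf C₀ hC₀).2.2 C₀ hC₀ hfC₀)
end

section
/- Let P be the 10-element poset P^{3323} with elements {0,…,10}, covering relations: 0<3, 0<4, 1<3, 1<5, 2<4, 2<5, 3<8, 3<10, 4<6, 4<7, 5<6, 5<7, 6<8, 6<9, 7<9, 7<10. Then P has the fixed point property. -/
/-- The underlying set of the poset `P^{3323}`. -/
def P3323 : Type := Fin 11

instance : DecidableEq P3323 := inferInstanceAs (DecidableEq (Fin 11))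
instance : Fintype P3323 := inferInstanceAs (Fintype (Fin 11))

/-- All strict relations of `P^{3323}` (the transitive closure of the covering
relations 0<3, 0<4, 1<3, 1<5, 2<4, 2<5, 3<8, 3<10, 4<6, 4<7, 5<6, 5<7,
6<8, 6<9, 7<9, 7<10). -/
def strictPairs3323 : List (Fin 11 × Fin 11) :=
  [(0,3),(0,4),(0,6),(0,7),(0,8),(0,9),(0,10),
   (1,3),(1,5),(1,6),(1,7),(1,8),(1,9),(1,10),
   (2,4),(2,5),(2,6),(2,7),(2,8),(2,9),(2,10),
   (3,8),(3,10),
   (4,6),(4,7),(4,8),(4,9),(4,10),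
   (5,6),(5,7),(5,8),(5,9),(5,10),
   (6,8),(6,9),
   (7,9),(7,10)]

def le3323 (a b : Fin 11) : Prop := a = b ∨ (a, b) ∈ strictPairs3323

instance (a b : Fin 11) : Decidable (le3323 a b) := by unfold le3323; infer_instance

lemma le3323_trans : ∀ a b c : Fin 11, le3323 a b → le3323 b c → le3323 a c := by decide

lemma le3323_antisymm : ∀ a b : Fin 11, le3323 a b → le3323 b a → a = b := by decide

instance : PartialOrder P3323 where
  le a b := le3323 a b
  le_refl a := Or.inl rfl
  le_trans a b c := le3323_trans a b c
  le_antisymm a b h h' := le3323_antisymm a b h h'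

/-!
A monotone self-map `f` of a finite poset without fixed points sends every `x` to an element
incomparable with `x`: if `x ≤ f x`, the increasing orbit of `x` stabilises at a fixed point.
In `P^{3323}` the value `f 9 ∈ {3, 8, 10}` bounds `f 6 ∈ {3, 7, 10}` and `f 7 ∈ {3, 6, 8}` from
above, which forces `f 6 = 3` or `f 7 = 3`; the automorphism exchanging `6 ↔ 7` and `8 ↔ 10`
swaps the two cases. Once `f 6 = 3`, incomparability and monotonicity pin down `f` on
`8, 0, 1, 3, 10, 7, 4, 5` in turn, and then `f 2` would lie below both `f 4 = 1` and `f 5 = 0`.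
-/

section FixedPoint

open Function

variable {α : Type*} [PartialOrder α] {f : α → α}

theorem Monotone.exists_isFixedPt_of_le_map [WellFoundedGT α] (hf : Monotone f) {x : α}
    (hx : x ≤ f x) : ∃ y, IsFixedPt f y := by
  obtain ⟨n, hn⟩ :=
    WellFoundedGT.monotone_chain_condition ⟨fun n => f^[n] x, hf.monotone_iterate_of_le_map hx⟩
  exact ⟨f^[n] x, (iterate_succ_apply' f n x).symm.trans (hn (n + 1) n.le_succ).symm⟩

theorem Monotone.exists_isFixedPt_of_map_le [WellFoundedLT α] (hf : Monotone f) {x : α}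
    (hx : f x ≤ x) : ∃ y, IsFixedPt f y :=
  hf.dual.exists_isFixedPt_of_le_map (α := αᵒᵈ) hx

theorem Monotone.incompRel_map_of_forall_not_isFixedPt [WellFoundedLT α] [WellFoundedGT α]
    (hf : Monotone f) (hfix : ∀ x, ¬IsFixedPt f x) (x : α) : IncompRel (· ≤ ·) x (f x) :=
  ⟨fun h => (hf.exists_isFixedPt_of_le_map h).elim hfix,
    fun h => (hf.exists_isFixedPt_of_map_le h).elim hfix⟩

end FixedPoint

namespace P3323

open Function

instance (n : ℕ) : OfNat P3323 n := inferInstanceAs (OfNat (Fin 11) n)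

instance : DecidableLE P3323 := inferInstanceAs (∀ a b : Fin 11, Decidable (le3323 a b))

local infix:50 " ∥ " => IncompRel (· ≤ ·)

def reflect : P3323 ≃o P3323 where
  toEquiv := (Equiv.swap (6 : Fin 11) 7).trans (Equiv.swap 8 10)
  map_rel_iff' {a b} := by revert a b; decide

variable {f : P3323 → P3323}

theorem map_six_eq_three_or_map_seven_eq_three (hf : Monotone f) (h6 : 6 ∥ f 6) (h7 : 7 ∥ f 7)
    (h9 : 9 ∥ f 9) : f 6 = 3 ∨ f 7 = 3 :=
  (by decide : ∀ a b c : P3323, 6 ∥ a → 7 ∥ b → 9 ∥ c → a ≤ c → b ≤ c → a = 3 ∨ b = 3)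
    _ _ _ h6 h7 h9 (hf (by decide)) (hf (by decide))

theorem exists_isFixedPt_of_map_six_eq_three (hf : Monotone f) (h6 : f 6 = 3) :
    ∃ x, IsFixedPt f x := by
  by_contra! hfix
  have hinc := hf.incompRel_map_of_forall_not_isFixedPt hfix
  have h8 : f 8 = 10 :=
    (by decide : ∀ y : P3323, 8 ∥ y → 3 ≤ y → y = 10) _ (hinc 8) (h6 ▸ hf (by decide))
  have h0 : f 0 = 1 :=
    (by decide : ∀ y : P3323, 0 ∥ y → y ≤ 3 → y = 1) _ (hinc 0) (h6 ▸ hf (by decide))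
  have h1 : f 1 = 0 :=
    (by decide : ∀ y : P3323, 1 ∥ y → y ≤ 3 → y = 0) _ (hinc 1) (h6 ▸ hf (by decide))
  have h3 : f 3 = 7 :=
    (by decide : ∀ y : P3323, 3 ∥ y → 1 ≤ y → 0 ≤ y → y ≤ 10 → y = 7) _ (hinc 3)
      (h0 ▸ hf (by decide)) (h1 ▸ hf (by decide)) (h8 ▸ hf (by decide))
  have h10 : f 10 = 9 :=
    (by decide : ∀ y : P3323, 10 ∥ y → 7 ≤ y → y = 9) _ (hinc 10) (h3 ▸ hf (by decide))
  have h7 : f 7 = 6 :=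
    (by decide : ∀ y : P3323, 7 ∥ y → y ≤ 9 → y = 6) _ (hinc 7) (h10 ▸ hf (by decide))
  have h4 : f 4 = 1 :=
    (by decide : ∀ y : P3323, 4 ∥ y → y ≤ 3 → y ≤ 6 → y = 1) _ (hinc 4)
      (h6 ▸ hf (by decide)) (h7 ▸ hf (by decide))
  have h5 : f 5 = 0 :=
    (by decide : ∀ y : P3323, 5 ∥ y → y ≤ 3 → y ≤ 6 → y = 0) _ (hinc 5)
      (h6 ▸ hf (by decide)) (h7 ▸ hf (by decide))
  exact (by decide : ∀ y : P3323, y ≤ 1 → y ≤ 0 → False) (f 2)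
    (h4 ▸ hf (by decide)) (h5 ▸ hf (by decide))

theorem exists_isFixedPt_of_map_seven_eq_three (hf : Monotone f) (h7 : f 7 = 3) :
    ∃ x, IsFixedPt f x := by
  have hg6 : (reflect ∘ f ∘ reflect.symm) 6 = 3 := by
    simp only [comp_apply, show reflect.symm 6 = 7 by decide, h7]
    decide
  obtain ⟨x, hx⟩ := exists_isFixedPt_of_map_six_eq_three
    (reflect.monotone.comp (hf.comp reflect.symm.monotone)) hg6
  exact ⟨reflect.symm x, reflect.eq_symm_apply.mpr hx⟩

end P3323

theorem stmt17 : ∀ f : P3323 → P3323, Monotone f → ∃ x, f x = x := by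
  intro f hf
  by_contra! hfix
  have hinc := hf.incompRel_map_of_forall_not_isFixedPt hfix
  obtain h6 | h7 := P3323.map_six_eq_three_or_map_seven_eq_three hf (hinc 6) (hinc 7) (hinc 9)
  · exact (P3323.exists_isFixedPt_of_map_six_eq_three hf h6).elim hfix
  · exact (P3323.exists_isFixedPt_of_map_seven_eq_three hf h7).elim hfix
end

section
/- Let P be the poset with elements {0,1,2,3,4,5,6,7,8} and covering relations: 0<3, 0<4, 1<3, 1<5, 2<4, 2<5, 3<6, 3<7, 4<6, 4<8, 5<7, 5<8 (three minimal, three middle, three maximal elements forming two stacked 6-crowns). Then every order-preserving map f : P → P without fixed points satisfies f({3,4,5}) = {3,4,5}. -/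
/-- The underlying set of the 9-element poset (two stacked 6-crowns). -/
def P9 : Type := Fin 9

instance : DecidableEq P9 := inferInstanceAs (DecidableEq (Fin 9))
instance : Fintype P9 := inferInstanceAs (Fintype (Fin 9))

/-- All strict relations (the transitive closure of the covering relations
0<3, 0<4, 1<3, 1<5, 2<4, 2<5, 3<6, 3<7, 4<6, 4<8, 5<7, 5<8). -/
def strictPairs9 : List (Fin 9 × Fin 9) :=
  [(0,3),(0,4),(0,6),(0,7),(0,8),
   (1,3),(1,5),(1,6),(1,7),(1,8),
   (2,4),(2,5),(2,6),(2,7),(2,8),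
   (3,6),(3,7),
   (4,6),(4,8),
   (5,7),(5,8)]

def le9 (a b : Fin 9) : Prop := a = b ∨ (a, b) ∈ strictPairs9

instance (a b : Fin 9) : Decidable (le9 a b) := by unfold le9; infer_instance

lemma le9_trans : ∀ a b c : Fin 9, le9 a b → le9 b c → le9 a c := by decide

lemma le9_antisymm : ∀ a b : Fin 9, le9 a b → le9 b a → a = b := by decide

instance : PartialOrder P9 where
  le a b := le9 a b
  le_refl a := Or.inl rfl
  le_trans a b c := le9_trans a b c
  le_antisymm a b h h' := le9_antisymm a b h h'

/-- The element of `P9` corresponding to `n : Fin 9`. -/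
def e (n : Fin 9) : P9 := n

/-!
Each middle element lies above two minimal ones. If `f` sent `3` to a minimal element `c`, then `f`
would also send `0` and `1` to `c`; as `f` has no fixed point, `c = 2`, and a finite check of the
remaining values produces a fixed point. Conjugating by the order automorphisms of `P9` (which
permute the minimal elements `0, 1, 2` and with them the middle elements `3 = {0,1}`, `4 = {0,2}`,
`5 = {1,2}`) transfers this to `4` and `5`. Hence `f` maps the 6-crown of non-minimal elements into
itself without fixed points, and such a self-map of the 6-crown permutes its minimal elements.
-/

namespace P9

instance (a b : P9) : Decidable (a ≤ b) := instDecidableLe9 a b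

-- Enumerating `P9` as `Fin 9`, rather than through its `Fintype` instance, keeps `decide` fast.
instance (p : P9 → Prop) [h : DecidablePred p] : Decidable (∀ x, p x) :=
  @Nat.decidableForallFin 9 p h

lemma isMin_iff {x : P9} : IsMin x ↔ x = e 0 ∨ x = e 1 ∨ x = e 2 := by
  revert x; unfold IsMin; decide

instance : DecidablePred (IsMin : P9 → Prop) := fun _ => decidable_of_iff _ isMin_iff.symm

/-- The automorphism induced by the cycle `0 → 1 → 2 → 0` of the minimal elements. -/
def rot : P9 ≃o P9 where
  toFun := ![e 1, e 2, e 0, e 5, e 3, e 4, e 7, e 8, e 6]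
  invFun := ![e 2, e 0, e 1, e 4, e 5, e 3, e 8, e 6, e 7]
  left_inv := by unfold Function.LeftInverse; decide
  right_inv := by unfold Function.RightInverse Function.LeftInverse; decide
  map_rel_iff' := by decide

variable {f : P9 → P9}

set_option synthInstance.maxSize 512 in
lemma not_isMin_apply_e3 (hf : Monotone f) (hfix : ∀ x, f x ≠ x) : ¬IsMin (f (e 3)) := by
  intro hmin
  have h0 : f (e 0) = f (e 3) := hmin.eq_of_le (hf (by decide))
  have h1 : f (e 1) = f (e 3) := hmin.eq_of_le (hf (by decide))
  have h3 : f (e 3) = e 2 := by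
    rcases isMin_iff.1 hmin with h | h | h
    · exact absurd (h0.trans h) (hfix _)
    · exact absurd (h1.trans h) (hfix _)
    · exact h
  have no_extension : ∀ v4 v5 v8 : P9, v4 ≠ e 4 → v5 ≠ e 5 → v8 ≠ e 8 → e 2 ≤ v4 → e 2 ≤ v5 →
      v4 ≤ v8 → v5 ≤ v8 → ∀ v6 : P9, v6 ≠ e 6 → e 2 ≤ v6 → v4 ≤ v6 →
      ∀ v7 : P9, v7 ≠ e 7 → e 2 ≤ v7 → v5 ≤ v7 → ∀ v2 : P9, v2 ≠ e 2 → v2 ≤ v4 → v2 ≤ v5 → False := by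
    decide +kernel
  exact no_extension (f (e 4)) (f (e 5)) (f (e 8)) (hfix _) (hfix _) (hfix _)
    (h0.trans h3 ▸ hf (by decide)) (h1.trans h3 ▸ hf (by decide)) (hf (by decide)) (hf (by decide))
    (f (e 6)) (hfix _) (h3 ▸ hf (by decide)) (hf (by decide))
    (f (e 7)) (hfix _) (h3 ▸ hf (by decide)) (hf (by decide))
    (f (e 2)) (hfix _) (hf (by decide)) (hf (by decide))

lemma not_isMin_apply_orderIso_apply_e3 (hf : Monotone f) (hfix : ∀ x, f x ≠ x) (σ : P9 ≃o P9) :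
    ¬IsMin (f (σ (e 3))) := by
  have hconj := not_isMin_apply_e3 (f := σ.symm ∘ f ∘ σ) (σ.symm.monotone.comp (hf.comp σ.monotone))
    (fun x hx => hfix (σ x) (by simpa using congrArg σ hx))
  exact fun hmin => hconj (σ.symm.toInitialSeg.isMin_apply_iff.2 hmin)

lemma image_middle_of_not_isMin (hf : Monotone f) (hfix : ∀ x, f x ≠ x)
    (h3 : ¬IsMin (f (e 3))) (h4 : ¬IsMin (f (e 4))) (h5 : ¬IsMin (f (e 5))) :
    f '' {e 3, e 4, e 5} = {e 3, e 4, e 5} := by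
  have crown : ∀ u3 u4 u5 : P9, ¬IsMin u3 → ¬IsMin u4 → ¬IsMin u5 → u3 ≠ e 3 → u4 ≠ e 4 →
      u5 ≠ e 5 → ∀ u6 : P9, u6 ≠ e 6 → u3 ≤ u6 → u4 ≤ u6 → ∀ u7 : P9, u7 ≠ e 7 → u3 ≤ u7 →
      u5 ≤ u7 → ∀ u8 : P9, u8 ≠ e 8 → u4 ≤ u8 → u5 ≤ u8 →
      ({u3, u4, u5} : Finset P9) = {e 3, e 4, e 5} := by
    decide +kernel
  have hcrown := crown _ _ _ h3 h4 h5 (hfix _) (hfix _) (hfix _) (f (e 6)) (hfix _) (hf (by decide))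
    (hf (by decide)) (f (e 7)) (hfix _) (hf (by decide)) (hf (by decide)) (f (e 8)) (hfix _)
    (hf (by decide)) (hf (by decide))
  rw [Set.image_insert_eq, Set.image_insert_eq, Set.image_singleton]
  simpa using congrArg ((↑) : Finset P9 → Set P9) hcrown

end P9

theorem stmt18 (f : P9 → P9) (hf : Monotone f) (hnofix : ∀ x, f x ≠ x) :
    f '' {e 3, e 4, e 5} = {e 3, e 4, e 5} :=
  P9.image_middle_of_not_isMin hf hnofix (P9.not_isMin_apply_e3 hf hnofix)
    (P9.not_isMin_apply_orderIso_apply_e3 hf hnofix P9.rot.symm)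
    (P9.not_isMin_apply_orderIso_apply_e3 hf hnofix P9.rot)
end
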